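/- Suppose û is a C^{1,2} solution of û_t + (1/2)β²(û_{zz} + û_z²) + g(z)û_z − h(t,z) = 0 with û(T,z) = 0, and let M(t,z) = h(t,z) + I − (h^P/Δ)û(t,z) with I ≥ 0, h^P > 0, Δ ∈ (0,1]. Define the operators Lv = v_t + (1/2)β²v_{zz} + g(z)v_z − (h^P/Δ)v and G(t,z,v,p) = −(1/2)β²p² + M(t,z). Then φ̄ := û is an upper solution, with L φ̄ − G(t,z,φ̄,φ̄_z) = −I ≤ 0 (so L φ̄ ≤ G(t,z,φ̄,φ̄_z)) and φ̄(T,z) ≥ 0, and φ := û − (Δ/h^P)I is a lower solution with L φ = G(t,z,φ,φ_z) and φ(T,z) ≤ 0; moreover φ ≤ φ̄ everywhere. -/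

import Mathlib

open Real

/-- Partial derivative in the first (time) variable. -/
noncomputable def pt (f : ℝ → ℝ → ℝ) (t z : ℝ) : ℝ := deriv (fun s => f s z) t

/-- Partial derivative in the second (space) variable. -/
noncomputable def pz (f : ℝ → ℝ → ℝ) (t z : ℝ) : ℝ := deriv (fun w => f t w) z

/-- Second partial derivative in the second (space) variable. -/
noncomputable def pzz (f : ℝ → ℝ → ℝ) (t z : ℝ) : ℝ :=
  deriv (deriv (fun w => f t w)) z

/-- Construction of an ordered pair of lower and upper solutions for the
pre-default semilinear CIVP: `φ̄ = û` is an upper solution (`Lφ̄ - G = -I ≤ 0`)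
and `φ = û - (Δ/h^P)I` is a lower solution with `Lφ = G`, `φ(T,·) ≤ 0`,
and `φ ≤ φ̄` everywhere. -/
theorem ordered_upper_lower_solutions
    (β T Δ hP I : ℝ) (hβ : β ≠ 0) (hhP : 0 < hP) (hΔ0 : 0 < Δ) (hΔ1 : Δ ≤ 1)
    (hI : 0 ≤ I)
    (g h : ℝ → ℝ → ℝ)
    (ghat : ℝ → ℝ)
    (uhat : ℝ → ℝ → ℝ)
    (hreg_t : ∀ z, Differentiable ℝ (fun t => uhat t z))
    (hreg_z : ∀ t, ContDiff ℝ 2 (fun z => uhat t z))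
    (hpde : ∀ t z, pt uhat t z + (1/2) * β ^ 2 * (pzz uhat t z + (pz uhat t z) ^ 2)
        + ghat z * pz uhat t z - h t z = 0)
    (hterm : ∀ z, uhat T z = 0)
    (M : ℝ → ℝ → ℝ) (hM : ∀ t z, M t z = h t z + I - (hP / Δ) * uhat t z)
    (L : (ℝ → ℝ → ℝ) → ℝ → ℝ → ℝ)
    (hL : ∀ v t z, L v t z = pt v t z + (1/2) * β ^ 2 * pzz v t z
        + ghat z * pz v t z - (hP / Δ) * v t z)
    (G : ℝ → ℝ → ℝ → ℝ → ℝ)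
    (hG : ∀ t z v p, G t z v p = -(1/2) * β ^ 2 * p ^ 2 + M t z)
    (φbar φlow : ℝ → ℝ → ℝ)
    (hφbar : ∀ t z, φbar t z = uhat t z)
    (hφlow : ∀ t z, φlow t z = uhat t z - (Δ / hP) * I) :
    (∀ t z, L φbar t z - G t z (φbar t z) (pz φbar t z) = -I) ∧
    (∀ t z, L φbar t z ≤ G t z (φbar t z) (pz φbar t z)) ∧
    (∀ z, 0 ≤ φbar T z) ∧
    (∀ t z, L φlow t z = G t z (φlow t z) (pz φlow t z)) ∧
    (∀ z, φlow T z ≤ 0) ∧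
    (∀ t z, φlow t z ≤ φbar t z) := by

  have hc : 0 ≤ Δ / hP * I := mul_nonneg (div_nonneg hΔ0.le hhP.le) hI
  -- derivatives of φbar coincide with uhat
  have hbt : ∀ t z, pt φbar t z = pt uhat t z := by
    intro t z; unfold pt; congr 1; funext s; exact hφbar s z
  have hbz : ∀ t z, pz φbar t z = pz uhat t z := by
    intro t z; unfold pz; congr 1; funext w; exact hφbar t w
  have hbzz : ∀ t z, pzz φbar t z = pzz uhat t z := by
    intro t z; unfold pzz
    have : (fun w => φbar t w) = fun w => uhat t w := funext (hφbar t)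
    rw [this]
  -- derivatives of φlow coincide with uhat
  have hlt : ∀ t z, pt φlow t z = pt uhat t z := by
    intro t z; unfold pt
    have : (fun s => φlow s z) = fun s => uhat s z - Δ / hP * I := by
      funext s; exact hφlow s z
    rw [this, deriv_sub_const]
  have hlz : ∀ t z, pz φlow t z = pz uhat t z := by
    intro t z; unfold pz
    have : (fun w => φlow t w) = fun w => uhat t w - Δ / hP * I := by
      funext w; exact hφlow t w
    rw [this, deriv_sub_const]
  have hlzz : ∀ t z, pzz φlow t z = pzz uhat t z := by
    intro t z; unfold pzz
    have : (fun w => φlow t w) = fun w => uhat t w - Δ / hP * I := by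
      funext w; exact hφlow t w
    rw [this]
    have : deriv (fun w => uhat t w - Δ / hP * I) = deriv (fun w => uhat t w) := by
      funext w; rw [deriv_sub_const]
    rw [this]
  have key1 : ∀ t z, L φbar t z - G t z (φbar t z) (pz φbar t z) = -I := by
    intro t z
    have hp := hpde t z
    rw [hL, hG, hM, hbt, hbz, hbzz, hφbar]
    nlinarith [hp]
  refine ⟨key1, ?_, ?_, ?_, ?_, ?_⟩
  · intro t z
    have := key1 t z
    linarith
  · intro z; rw [hφbar, hterm]
  · intro t z
    have hp := hpde t z
    have hΔne : Δ ≠ 0 := ne_of_gt hΔ0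
    have hPne : hP ≠ 0 := ne_of_gt hhP
    have e : hP / Δ * (uhat t z - Δ / hP * I) = hP / Δ * uhat t z - I := by
      field_simp
    rw [hL, hG, hM, hlt, hlz, hlzz, hφlow, e]
    linear_combination hp
  · intro z; rw [hφlow, hterm]; linarith
  · intro t z; rw [hφlow, hφbar]; linarith
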